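/- Let φ : (0, 1/2) → (0,∞) be nondecreasing with ∫₀^{1/2} φ(s)/s ds < ∞ (Dini condition). Let f ∈ L¹(ℝ³) and K ≥ 0 be such that Ω(f, I(x,r)) ≤ K·φ(r) for every x ∈ ℝ³ and every 0 < r < 1/2. Then there exists a continuous function g : ℝ³ → ℝ such that f = g almost everywhere. In particular, if a weighted bmo space with weight φ satisfying the Dini condition contains f, then f has a continuous representative. -/

import Mathlib

open MeasureTheory Set

/-- The open cube in `ℝ³` centered at `x` with side length `r`. -/
def cube (x : EuclideanSpace ℝ (Fin 3)) (r : ℝ) : Set (EuclideanSpace ℝ (Fin 3)) :=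
  {y | ∀ i : Fin 3, |y i - x i| < r / 2}

/-- The mean value `f_{I(x,r)}` of `f` over the cube `I(x,r)` (of volume `r³`). -/
noncomputable def cubeAvg (f : EuclideanSpace ℝ (Fin 3) → ℝ)
    (x : EuclideanSpace ℝ (Fin 3)) (r : ℝ) : ℝ :=
  (r ^ 3)⁻¹ * ∫ y in cube x r, f y

/-- The mean oscillation `Ω(f, I(x,r))` of `f` over the cube `I(x,r)`. -/
noncomputable def meanOsc (f : EuclideanSpace ℝ (Fin 3) → ℝ)
    (x : EuclideanSpace ℝ (Fin 3)) (r : ℝ) : ℝ :=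
  (r ^ 3)⁻¹ * ∫ y in cube x r, |f y - cubeAvg f x r|

/-!
Along the radii `r n = 2^{-(n+2)}` the cube average `cubeAvg f x (r n)` changes by at most
`8 K φ (r n)` when passing to `r (n+1)`, even when the center moves by less than `r (n+1) / 2`,
because the smaller cube lies in the larger one. The Dini condition makes `∑ φ (r n)` finite, so
the averages converge, and the uniform control of the steps makes the limit continuous. By the
Lebesgue differentiation theorem the limit equals `f` almost everywhere.
-/

open Filter Topology

local notation "ℝ³" => EuclideanSpace ℝ (Fin 3)

theorem summable_comp_div_two_pow_of_lintegral_div_lt_top {φ : ℝ → ℝ} {a : ℝ} (ha : 0 < a)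
    (hφ_nonneg : ∀ t ∈ Ioo 0 a, 0 ≤ φ t) (hφ_mono : MonotoneOn φ (Ioo 0 a))
    (hDini : ∫⁻ s in Ioo 0 a, ENNReal.ofReal (φ s / s) < ⊤) :
    Summable fun n : ℕ => φ (a / 2 ^ n) := by
  set r : ℕ → ℝ := fun n => a / 2 ^ n with hr
  have hr_pos : ∀ n, 0 < r n := fun n => by positivity
  have hr_le : ∀ n, r n ≤ a := fun n => div_le_self ha.le (one_le_pow₀ one_le_two)
  have hr_succ : ∀ n, r (n + 1) = r n / 2 := fun n => by simp only [hr, pow_succ, div_div]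
  have hr_anti : Antitone r := fun m n hmn =>
    div_le_div_of_nonneg_left ha.le (by positivity) (pow_le_pow_right₀ one_le_two hmn)
  have hr_mem : ∀ n, r (n + 1) ∈ Ioo 0 a := fun n =>
    ⟨hr_pos _, (hr_succ n ▸ half_lt_self (hr_pos n)).trans_le (hr_le n)⟩
  have hJ_sub : ∀ n, Ioo (r (n + 1)) (r n) ⊆ Ioo 0 a := fun n s hs =>
    ⟨(hr_pos _).trans hs.1, hs.2.trans_le (hr_le n)⟩
  have hlower : ∀ n, ENNReal.ofReal (φ (r (n + 1)) / 2)
      ≤ ∫⁻ s in Ioo (r (n + 1)) (r n), ENNReal.ofReal (φ s / s) := by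
    intro n
    calc ENNReal.ofReal (φ (r (n + 1)) / 2)
        = ENNReal.ofReal (φ (r (n + 1)) / r n) * volume (Ioo (r (n + 1)) (r n)) := by
          rw [Real.volume_Ioo, ← ENNReal.ofReal_mul (div_nonneg (hφ_nonneg _ (hr_mem n))
            (hr_pos n).le), hr_succ]
          congr 1
          field_simp [(hr_pos n).ne']
          ring
      _ = ∫⁻ _ in Ioo (r (n + 1)) (r n), ENNReal.ofReal (φ (r (n + 1)) / r n) :=
          (setLIntegral_const _ _).symm
      _ ≤ ∫⁻ s in Ioo (r (n + 1)) (r n), ENNReal.ofReal (φ s / s) :=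
          setLIntegral_mono' measurableSet_Ioo fun s hs => ENNReal.ofReal_le_ofReal <|
            div_le_div₀ (hφ_nonneg s (hJ_sub n hs))
              (hφ_mono (hr_mem n) (hJ_sub n hs) hs.1.le) (hr_pos _ |>.trans hs.1) hs.2.le
  have htsum : ∑' n, ENNReal.ofReal (φ (r (n + 1)) / 2) ≠ ⊤ := by
    refine ne_top_of_le_ne_top hDini.ne ?_
    calc ∑' n, ENNReal.ofReal (φ (r (n + 1)) / 2)
        ≤ ∑' n, ∫⁻ s in Ioo (r (n + 1)) (r n), ENNReal.ofReal (φ s / s) :=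
          ENNReal.tsum_le_tsum hlower
      _ = ∫⁻ s in ⋃ n, Ioo (r (n + 1)) (r n), ENNReal.ofReal (φ s / s) :=
          (lintegral_iUnion (fun _ => measurableSet_Ioo)
            hr_anti.pairwise_disjoint_on_Ioo_succ _).symm
      _ ≤ ∫⁻ s in Ioo 0 a, ENNReal.ofReal (φ s / s) :=
          lintegral_mono_set (iUnion_subset hJ_sub)
  have hsum : Summable fun n => φ (r (n + 1)) / 2 :=
    (ENNReal.summable_toReal htsum).congr fun n =>
      ENNReal.toReal_ofReal (div_nonneg (hφ_nonneg _ (hr_mem n)) two_pos.le)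
  refine (summable_nat_add_iff 1).1 ((hsum.mul_left 2).congr fun n => ?_)
  simp only [hr]
  ring

theorem abs_apply_sub_apply_le_dist (x y : ℝ³) (i : Fin 3) : |x i - y i| ≤ dist x y := by
  simpa [dist_eq_norm, Real.norm_eq_abs] using PiLp.norm_apply_le (x - y) i

theorem cube_subset_cube {a b : ℝ³} {s r : ℝ} (h : dist a b ≤ (r - s) / 2) :
    cube a s ⊆ cube b r := fun y hy i =>
  calc |y i - b i| ≤ |y i - a i| + |a i - b i| := abs_sub_le _ _ _
    _ < s / 2 + (r - s) / 2 :=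
        add_lt_add_of_lt_of_le (hy i) ((abs_apply_sub_apply_le_dist a b i).trans h)
    _ = r / 2 := by ring

theorem cube_subset_closedBall (x : ℝ³) {r : ℝ} (hr : 0 ≤ r) :
    cube x r ⊆ Metric.closedBall x r := by
  intro y hy
  have hsq : ∀ i, dist (y i) (x i) ^ 2 ≤ (r / 2) ^ 2 := fun i => by
    rw [Real.dist_eq]; exact pow_le_pow_left₀ (abs_nonneg _) (hy i).le 2
  rw [Metric.mem_closedBall, EuclideanSpace.dist_eq, Real.sqrt_le_left hr, Fin.sum_univ_three]
  nlinarith [hsq 0, hsq 1, hsq 2]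

theorem cube_eq_preimage_ball (x : ℝ³) {r : ℝ} (hr : 0 < r) :
    cube x r =
      (MeasurableEquiv.toLp 2 (Fin 3 → ℝ)).symm ⁻¹' Metric.ball (fun i => x i) (r / 2) := by
  ext y
  simp [cube, dist_pi_lt_iff (half_pos hr), Real.dist_eq]

theorem volume_cube (x : ℝ³) {r : ℝ} (hr : 0 < r) :
    volume (cube x r) = ENNReal.ofReal (r ^ 3) := by
  rw [cube_eq_preimage_ball x hr, (EuclideanSpace.volume_preserving_symm_measurableEquiv_toLp
    (Fin 3)).measure_preimage measurableSet_ball.nullMeasurableSet,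
    Real.volume_pi_ball _ (half_pos hr)]
  simp [mul_div_cancel₀]

section Averages

variable {f : ℝ³ → ℝ} {x : ℝ³} {r : ℝ}

theorem cubeAvg_sub (hr : 0 < r) (hf : IntegrableOn f (cube x r)) (c : ℝ) :
    cubeAvg f x r - c = (r ^ 3)⁻¹ * ∫ y in cube x r, (f y - c) := by
  have hvol := volume_cube x hr
  rw [integral_sub hf (integrableOn_const (by simp [hvol])), setIntegral_const, measureReal_def,
    hvol, ENNReal.toReal_ofReal (by positivity), smul_eq_mul, mul_sub, cubeAvg,
    inv_mul_cancel_left₀ (by positivity)]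

theorem abs_cubeAvg_sub_le (hr : 0 < r) {S : Set ℝ³} (hS : cube x r ⊆ S)
    (hS_fin : volume S ≠ ⊤) (hf : IntegrableOn f S) (c : ℝ) :
    |cubeAvg f x r - c| ≤ (r ^ 3)⁻¹ * ∫ y in S, |f y - c| := by
  rw [cubeAvg_sub hr (hf.mono_set hS), abs_mul, abs_of_pos (by positivity)]
  gcongr
  calc |∫ y in cube x r, (f y - c)| ≤ ∫ y in cube x r, |f y - c| :=
        abs_integral_le_integral_abs
    _ ≤ ∫ y in S, |f y - c| :=
        setIntegral_mono_set (hf.sub (integrableOn_const hS_fin)).abs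
          (ae_of_all _ fun _ => abs_nonneg _) (ae_of_all _ hS)

theorem abs_cubeAvg_sub_cubeAvg_le {x' : ℝ³} {r' : ℝ} (hr' : 0 < r') (hr : 0 < r)
    (hsub : cube x' r' ⊆ cube x r) (hf : IntegrableOn f (cube x r)) :
    |cubeAvg f x' r' - cubeAvg f x r| ≤ (r / r') ^ 3 * meanOsc f x r := by
  refine (abs_cubeAvg_sub_le hr' hsub (by simp [volume_cube x hr]) hf _).trans_eq ?_
  rw [meanOsc]
  field_simp

theorem dist_cubeAvg_half_le {x' : ℝ³} (hr : 0 < r) (hx : dist x' x < r / 4)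
    (hf : IntegrableOn f (cube x r)) :
    dist (cubeAvg f x' (r / 2)) (cubeAvg f x r) ≤ 8 * meanOsc f x r := by
  have hsub : cube x' (r / 2) ⊆ cube x r := cube_subset_cube (by linarith)
  refine (abs_cubeAvg_sub_cubeAvg_le (half_pos hr) hr hsub hf).trans_eq ?_
  rw [div_div_cancel₀ hr.ne']
  norm_num

theorem ae_tendsto_cubeAvg (hf : LocallyIntegrable f volume) :
    ∀ᵐ x, Tendsto (cubeAvg f x) (𝓝[>] 0) (𝓝 (f x)) := by
  set C := volume.real (Metric.ball (0 : ℝ³) 1)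
  filter_upwards [IsUnifLocDoublingMeasure.ae_tendsto_average_norm_sub volume hf 1] with x hx
  have hball :
      Tendsto (fun r => ⨍ y in Metric.closedBall x r, ‖f y - f x‖) (𝓝[>] 0) (𝓝 0) :=
    hx (fun _ => x) id tendsto_id (eventually_mem_nhdsWithin.mono fun r (hr : 0 < r) => by
      simp [hr.le])
  have hbound : ∀ r, 0 < r →
      dist (cubeAvg f x r) (f x) ≤ C * ⨍ y in Metric.closedBall x r, ‖f y - f x‖ := by
    intro r hr
    have hvol : volume.real (Metric.closedBall x r) = r ^ 3 * C := by
      simp [measureReal_def, Measure.addHaar_closedBall _ _ hr.le, C, hr.le]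
    have hfin : volume (Metric.closedBall x r) ≠ ⊤ := measure_closedBall_lt_top.ne
    calc dist (cubeAvg f x r) (f x)
        ≤ (r ^ 3)⁻¹ * ∫ y in Metric.closedBall x r, |f y - f x| :=
          abs_cubeAvg_sub_le hr (cube_subset_closedBall x hr.le) hfin
            (hf.integrableOn_isCompact (isCompact_closedBall x r)) _
      _ = C * ⨍ y in Metric.closedBall x r, ‖f y - f x‖ := by
          rw [← measure_smul_setAverage _ hfin, hvol, smul_eq_mul]
          field_simp
          simp [Real.norm_eq_abs]
  exact tendsto_iff_dist_tendsto_zero.2 <| squeeze_zero' (Eventually.of_forall fun _ => dist_nonneg)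
    (eventually_mem_nhdsWithin.mono hbound) (by simpa using hball.const_mul C)

end Averages

theorem exists_continuous_tendsto_of_dist_le_summable {X Y : Type*} [PseudoMetricSpace X]
    [PseudoMetricSpace Y] [CompleteSpace Y] {A : ℕ → X → Y} {d : ℕ → ℝ}
    (hd : Summable d)
    (hA : ∀ n, ∃ δ > 0, ∀ a b, dist a b < δ → dist (A (n + 1) a) (A n b) ≤ d n) :
    ∃ g : X → Y, Continuous g ∧ ∀ x, Tendsto (fun n => A n x) atTop (𝓝 (g x)) := by
  have hstep : ∀ x n, dist (A n x) (A (n + 1) x) ≤ d n := fun x n => by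
    obtain ⟨δ, hδ, h⟩ := hA n
    simpa [dist_comm] using h x x (by simpa using hδ)
  choose g hg using fun x =>
    cauchySeq_tendsto_of_complete (cauchySeq_of_dist_le_of_summable d (hstep x) hd)
  set T : ℕ → ℝ := fun n => ∑' m, d (m + n)
  have htail : ∀ x n, dist (A n x) (g x) ≤ T n := fun x n => by
    simpa only [T, add_comm] using dist_le_tsum_of_dist_le_of_tendsto d (hstep x) hd (hg x) n
  refine ⟨g, Metric.continuous_iff.2 fun b ε hε => ?_, hg⟩
  have hsmall : Tendsto (fun n => T (n + 1) + d n + T n) atTop (𝓝 0) := by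
    simpa using (((tendsto_sum_nat_add d).comp (tendsto_add_atTop_nat 1)).add
      hd.tendsto_atTop_zero).add (tendsto_sum_nat_add d)
  obtain ⟨n, hn⟩ := (hsmall.eventually (gt_mem_nhds hε)).exists
  obtain ⟨δ, hδ, hclose⟩ := hA n
  refine ⟨δ, hδ, fun a hab => ?_⟩
  calc dist (g a) (g b)
      ≤ dist (g a) (A (n + 1) a) + dist (A (n + 1) a) (A n b) + dist (A n b) (g b) :=
        dist_triangle4 _ _ _ _
    _ ≤ T (n + 1) + d n + T n := by
        gcongr
        · rw [dist_comm]; exact htail a (n + 1)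
        · exact hclose a b hab
        · exact htail b n
    _ < ε := hn

theorem dini_implies_continuous_representative_general
    (φ : ℝ → ℝ)
    (hφpos : ∀ t : ℝ, 0 < t → t < 1 / 2 → 0 < φ t)
    (hφmono : ∀ a b : ℝ, 0 < a → a ≤ b → b < 1 / 2 → φ a ≤ φ b)
    (hDini : (∫⁻ s in Set.Ioo (0 : ℝ) (1 / 2), ENNReal.ofReal (φ s / s)) < ⊤)
    (f : EuclideanSpace ℝ (Fin 3) → ℝ) (hf : Integrable f volume)
    (K : ℝ)
    (hosc : ∀ (x : EuclideanSpace ℝ (Fin 3)) (r : ℝ), 0 < r → r < 1 / 2 →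
      meanOsc f x r ≤ K * φ r) :
    ∃ g : EuclideanSpace ℝ (Fin 3) → ℝ, Continuous g ∧ f =ᵐ[volume] g := by
  set r : ℕ → ℝ := fun n => 1 / 2 / 2 ^ (n + 1) with hr
  have hr_pos : ∀ n, 0 < r n := fun n => by positivity
  have hr_lt : ∀ n, r n < 1 / 2 := fun n =>
    div_lt_self one_half_pos (one_lt_pow₀ one_lt_two n.succ_ne_zero)
  have hr_succ : ∀ n, r (n + 1) = r n / 2 := fun n => by simp only [hr]; ring
  have hsum : Summable fun n => φ (r n) :=
    (summable_nat_add_iff 1).2 <| summable_comp_div_two_pow_of_lintegral_div_lt_top one_half_pos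
      (fun t ht => (hφpos t ht.1 ht.2).le) (fun s hs t ht hst => hφmono s t hs.1 hst ht.2) hDini
  have hclose : ∀ n a b, dist a b < r (n + 1) / 2 →
      dist (cubeAvg f a (r (n + 1))) (cubeAvg f b (r n)) ≤ 8 * (K * φ (r n)) := by
    intro n a b hab
    rw [hr_succ] at hab ⊢
    exact (dist_cubeAvg_half_le (hr_pos n) (by linarith) hf.integrableOn).trans
      (by linarith [hosc b _ (hr_pos n) (hr_lt n)])
  obtain ⟨g, hg_cont, hg_lim⟩ := exists_continuous_tendsto_of_dist_le_summable
    (A := fun n x => cubeAvg f x (r n)) ((hsum.mul_left K).mul_left 8)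
    fun n => ⟨_, half_pos (hr_pos (n + 1)), hclose n⟩
  have hr_lim : Tendsto r atTop (𝓝[>] 0) := by
    refine tendsto_nhdsWithin_iff.2 ⟨?_, Eventually.of_forall hr_pos⟩
    exact tendsto_const_nhds.div_atTop
      ((tendsto_pow_atTop_atTop_of_one_lt one_lt_two).comp (tendsto_add_atTop_nat 1))
  refine ⟨g, hg_cont, ?_⟩
  filter_upwards [ae_tendsto_cubeAvg hf.locallyIntegrable] with x hx
  exact tendsto_nhds_unique (hx.comp hr_lim) (hg_lim x)

/-- **Dini condition forces continuity in weighted bmo.** If `φ : (0,1/2) → (0,∞)` is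
nondecreasing with `∫₀^{1/2} φ(s)/s ds < ∞`, `f ∈ L¹(ℝ³)` and `Ω(f, I(x,r)) ≤ K·φ(r)` for all
`x ∈ ℝ³`, `0 < r < 1/2`, then `f` agrees almost everywhere with a continuous function. -/
theorem dini_implies_continuous_representative
    (φ : ℝ → ℝ)
    (hφpos : ∀ t : ℝ, 0 < t → t < 1 / 2 → 0 < φ t)
    (hφmono : ∀ a b : ℝ, 0 < a → a ≤ b → b < 1 / 2 → φ a ≤ φ b)
    (hDini : (∫⁻ s in Set.Ioo (0 : ℝ) (1 / 2), ENNReal.ofReal (φ s / s)) < ⊤)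
    (f : EuclideanSpace ℝ (Fin 3) → ℝ) (hf : Integrable f volume)
    (K : ℝ) (hK : 0 ≤ K)
    (hosc : ∀ (x : EuclideanSpace ℝ (Fin 3)) (r : ℝ), 0 < r → r < 1 / 2 →
      meanOsc f x r ≤ K * φ r) :
    ∃ g : EuclideanSpace ℝ (Fin 3) → ℝ, Continuous g ∧ f =ᵐ[volume] g :=
  dini_implies_continuous_representative_general φ hφpos hφmono hDini f hf K hosc
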